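/- arXiv:0908.0043 — 7 statements merged into one kernel-verified Lean document; each statement's English description precedes it below -/
import Mathlib

section
/- Let M be a matroid on a finite ground set whose elements arrive in a fixed order e_1, e_2, ..., e_n, with a weight v(e_i) ≥ 0 attached to each element. Define sets S^0 = ∅ and, for k = 1, ..., n: if S^{k-1} ∪ {e_k} is independent in M, set S^k = S^{k-1} ∪ {e_k}; otherwise, let j be an element of minimum weight among those elements j' of S^{k-1} ∪ {e_k} such that S^{k-1} ∪ {e_k} \ {j'} is independent, and set S^k = S^{k-1} ∪ {e_k} \ {j} if v(j) < v(e_k), and S^k = S^{k-1} otherwise. Then for every k, the set S^k is a maximum-weight basis of the restriction of M to {e_1, ..., e_k}; in particular S^n is a maximum-weight basis of M. -/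
/-!
A basis `I` of `X` is a maximum-weight basis as soon as, for every upper level set `U` of the
weights, `I ∩ U` is a basis of `X ∩ U`: then `I` has at least as many elements of weight `≥ s`
as any other basis, for every `s`, and equal cardinality turns this into a comparison of sums.
The greedy step preserves this property. When `insert a I` is dependent, the elements whose
removal restores independence form the fundamental circuit of `a`; if its lightest element `j`
lies in `U`, the whole circuit does, so `a` is spanned by `I ∩ U` and exchanging `j` for `a`
keeps a basis of `insert a X ∩ U`.
-/

open Set

theorem Finset.sum_le_sum_of_forall_card_filter_le {ι β : Type*} [DecidableEq ι]
    [AddCommMonoid β] [LinearOrder β] [IsOrderedAddMonoid β] (v : ι → β) {B S : Finset ι}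
    (hcard : B.card = S.card) (h : ∀ s, {x ∈ B | s ≤ v x}.card ≤ {x ∈ S | s ≤ v x}.card) :
    ∑ x ∈ B, v x ≤ ∑ x ∈ S, v x := by
  induction B using Finset.strongInduction generalizing S with
  | _ B ih =>
    rcases B.eq_empty_or_nonempty with rfl | hB
    · simp [Finset.card_eq_zero.1 hcard.symm]
    obtain ⟨y, hyB, hy⟩ := B.exists_max_image v hB
    have hy' : y ∈ ({z ∈ B | v y ≤ v z} : Finset ι) := Finset.mem_filter.2 ⟨hyB, le_rfl⟩
    obtain ⟨x, hx⟩ := Finset.card_pos.1 ((Finset.card_pos.2 ⟨y, hy'⟩).trans_le (h (v y)))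
    obtain ⟨hxS, hyx⟩ := Finset.mem_filter.1 hx
    have herase : ∀ s, {z ∈ B.erase y | s ≤ v z}.card ≤ {z ∈ S.erase x | s ≤ v z}.card := by
      intro s
      rw [Finset.filter_erase, Finset.filter_erase]
      by_cases hs : s ≤ v y
      · rw [Finset.card_erase_of_mem (Finset.mem_filter.2 ⟨hyB, hs⟩),
          Finset.card_erase_of_mem (Finset.mem_filter.2 ⟨hxS, hs.trans hyx⟩)]
        exact Nat.sub_le_sub_right (h s) 1
      · have : ({z ∈ B | s ≤ v z} : Finset ι) = ∅ :=
          Finset.filter_eq_empty_iff.2 fun z hz hsz => hs (hsz.trans (hy z hz))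
        simp [this]
    rw [← Finset.add_sum_erase B v hyB, ← Finset.add_sum_erase S v hxS]
    refine add_le_add hyx (ih _ (Finset.erase_ssubset hyB) ?_ herase)
    rw [Finset.card_erase_of_mem hyB, Finset.card_erase_of_mem hxS, hcard]

theorem Fin.image_setOf_val_lt_succ {α : Type*} {n k : ℕ} (e : Fin n → α) (hk : k < n) :
    e '' {i : Fin n | (i : ℕ) < k + 1} = insert (e ⟨k, hk⟩) (e '' {i | (i : ℕ) < k}) := by
  rw [← image_insert_eq]
  congr 1
  ext i
  simp [Fin.ext_iff, Nat.le_iff_lt_or_eq, or_comm]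

namespace Matroid

variable {α : Type*} {M : Matroid α} {I X U Y : Set α} {a j : α}

theorem IsBasis.exchange_isBasis_of_indep (hI : M.IsBasis I Y) (hj : j ∈ I) (ha : a ∉ I)
    (haY : a ∈ Y) (h : M.Indep (insert a I \ {j})) : M.IsBasis (insert a I \ {j}) Y := by
  rw [← isBase_restrict_iff hI.subset_ground]
  refine hI.restrict_isBase.exchange_isBase_of_indep' hj ha ⟨h, ?_⟩
  exact sdiff_subset.trans (insert_subset haY hI.subset)

theorem isBasis_insert_inter_of_indep (h : M.IsBasis (I ∩ U) (X ∩ U))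
    (hI : M.Indep (insert a I ∩ U)) : M.IsBasis (insert a I ∩ U) (insert a X ∩ U) := by
  by_cases ha : a ∈ U
  · simp only [insert_inter_of_mem ha] at hI ⊢
    exact h.insert_isBasis_insert hI
  · rw [insert_inter_of_notMem ha, insert_inter_of_notMem ha]
    exact h

theorem isBasis_insert_inter_of_not_indep (h : M.IsBasis (I ∩ U) (X ∩ U))
    (hdep : ¬ M.Indep (insert a (I ∩ U))) (haE : a ∈ M.E) :
    M.IsBasis (I ∩ U) (insert a X ∩ U) := by
  by_cases ha : a ∈ U
  · rw [insert_inter_of_mem ha]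
    refine h.indep.isBasis_of_subset_of_subset_closure
      (h.subset.trans (subset_insert _ _)) (insert_subset ?_ h.subset_closure)
    exact h.indep.mem_closure_iff.2 <| .inl <|
      (not_indep_iff (insert_subset haE h.indep.subset_ground)).1 hdep
  · rw [insert_inter_of_notMem ha]
    exact h

theorem not_indep_insert_inter_preimage {β : Type*} [Preorder β] {v : α → β} {T : Set β}
    (hI : M.Indep I) (haE : a ∈ M.E) (hdep : ¬ M.Indep (insert a I))
    (hmin : ∀ f ∈ insert a I, M.Indep (insert a I \ {f}) → v j ≤ v f)
    (hT : IsUpperSet T) (hj : v j ∈ T) : ¬ M.Indep (insert a (I ∩ v ⁻¹' T)) := by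
  have haI : a ∉ I := fun h => hdep (by rwa [insert_eq_of_mem h])
  have hcl : a ∈ M.closure I := hI.mem_closure_iff.2 <| .inl <|
    (not_indep_iff (insert_subset haE hI.subset_ground)).1 hdep
  refine fun hind => (hI.fundCircuit_isCircuit hcl haI).not_indep (hind.subset fun f hf => ?_)
  obtain rfl | hfI := M.fundCircuit_subset_insert a I hf
  · exact mem_insert _ _
  · exact mem_insert_of_mem _
      ⟨hfI, hT (hmin f (mem_insert_of_mem _ hfI) ((hI.mem_fundCircuit_iff hcl haI).1 hf)) hj⟩

variable {β : Type*}

def IsUpperBasis [Preorder β] (M : Matroid α) (v : α → β) (I X : Set α) : Prop :=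
  ∀ T : Set β, IsUpperSet T → M.IsBasis (I ∩ v ⁻¹' T) (X ∩ v ⁻¹' T)

def GreedyStep [DecidableEq α] [Preorder β] (M : Matroid α) (v : α → β) (I : Finset α) (a : α)
    (I' : Finset α) : Prop :=
  (M.Indep (insert a ↑I) → I' = insert a I) ∧
  (¬ M.Indep (insert a ↑I) →
    ∃ j ∈ insert a I,
      M.Indep ↑((insert a I).erase j) ∧
      (∀ j' ∈ insert a I, M.Indep ↑((insert a I).erase j') → v j ≤ v j') ∧
      (v j < v a → I' = (insert a I).erase j) ∧
      (¬ v j < v a → I' = I))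

section Preorder

variable [Preorder β] {v : α → β}

theorem isUpperBasis_empty (M : Matroid α) (v : α → β) : M.IsUpperBasis v ∅ ∅ := by
  simp [IsUpperBasis]

theorem IsUpperBasis.isBasis (h : M.IsUpperBasis v I X) : M.IsBasis I X := by
  simpa using h univ isUpperSet_univ

theorem IsUpperBasis.insert_of_indep (h : M.IsUpperBasis v I X) (hI : M.Indep (insert a I)) :
    M.IsUpperBasis v (insert a I) (insert a X) :=
  fun T hT => isBasis_insert_inter_of_indep (h T hT) (hI.subset inter_subset_left)

theorem IsUpperBasis.insert_right_of_le (h : M.IsUpperBasis v I X) (haE : a ∈ M.E)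
    (hdep : ¬ M.Indep (insert a I))
    (hmin : ∀ f ∈ insert a I, M.Indep (insert a I \ {f}) → v j ≤ v f) (hle : v a ≤ v j) :
    M.IsUpperBasis v I (insert a X) := by
  intro T hT
  by_cases ha : v a ∈ T
  · exact isBasis_insert_inter_of_not_indep (h T hT)
      (not_indep_insert_inter_preimage h.isBasis.indep haE hdep hmin hT (hT hle ha)) haE
  · rw [insert_inter_of_notMem (show a ∉ v ⁻¹' T from ha)]
    exact h T hT

theorem IsUpperBasis.exchange_of_lt (h : M.IsUpperBasis v I X) (haE : a ∈ M.E)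
    (hdep : ¬ M.Indep (insert a I)) (hjI : j ∈ insert a I) (hj : M.Indep (insert a I \ {j}))
    (hmin : ∀ f ∈ insert a I, M.Indep (insert a I \ {f}) → v j ≤ v f) (hlt : v j < v a) :
    M.IsUpperBasis v (insert a I \ {j}) (insert a X) := by
  intro T hT
  by_cases hjT : v j ∈ T
  · have ha : a ∈ v ⁻¹' T := hT hlt.le hjT
    have hjI' : j ∈ I := hjI.resolve_left fun hja => hlt.ne (congrArg v hja)
    have hdepT := not_indep_insert_inter_preimage h.isBasis.indep haE hdep hmin hT hjT
    have haIT : a ∉ I ∩ v ⁻¹' T := fun haI =>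
      hdepT (by rw [insert_eq_of_mem haI]; exact (h T hT).indep)
    have heq : (insert a I \ {j}) ∩ v ⁻¹' T = insert a (I ∩ v ⁻¹' T) \ {j} := by
      rw [sdiff_inter_right_comm, insert_inter_of_mem ha]
    rw [heq]
    exact (isBasis_insert_inter_of_not_indep (h T hT) hdepT haE).exchange_isBasis_of_indep
      ⟨hjI', hjT⟩ haIT ⟨mem_insert _ _, ha⟩ (heq ▸ hj.subset inter_subset_left)
  · have heq : (insert a I \ {j}) ∩ v ⁻¹' T = insert a I ∩ v ⁻¹' T := by
      rw [sdiff_inter_right_comm, sdiff_singleton_eq_self fun hj' => hjT hj'.2]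
    rw [heq]
    exact isBasis_insert_inter_of_indep (h T hT) (heq ▸ hj.subset inter_subset_left)

end Preorder

theorem IsUpperBasis.of_greedyStep [DecidableEq α] [LinearOrder β] {v : α → β}
    {I I' : Finset α} (h : M.IsUpperBasis v ↑I X) (haE : a ∈ M.E)
    (hstep : M.GreedyStep v I a I') :
    M.IsUpperBasis v ↑I' (insert a X) := by
  obtain ⟨hadd, hdep⟩ := hstep
  by_cases hind : M.Indep (insert a ↑I)
  · rw [hadd hind, Finset.coe_insert]
    exact h.insert_of_indep hind
  obtain ⟨j, hjI, hj, hmin, hswap, hkeep⟩ := hdep hind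
  rw [Finset.coe_erase, Finset.coe_insert] at hj
  have hmin' : ∀ f ∈ (insert a ↑I : Set α), M.Indep (insert a ↑I \ {f}) → v j ≤ v f :=
    fun f hf hf' => hmin f (by simpa using hf) (by simpa using hf')
  by_cases hlt : v j < v a
  · rw [hswap hlt, Finset.coe_erase, Finset.coe_insert]
    exact h.exchange_of_lt haE hind (by simpa using hjI) hj hmin' hlt
  · rw [hkeep hlt]
    exact h.insert_right_of_le haE hind hmin' (not_lt.1 hlt)

theorem IsUpperBasis.sum_le [DecidableEq α] [AddCommMonoid β] [LinearOrder β]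
    [IsOrderedAddMonoid β] {v : α → β} {B S : Finset α} (h : M.IsUpperBasis v ↑S X)
    (hB : M.IsBasis ↑B X) : ∑ x ∈ B, v x ≤ ∑ x ∈ S, v x := by
  have hcoe : ∀ (F : Finset α) (s : β), (↑F ∩ v ⁻¹' Ici s : Set α) = ↑{x ∈ F | s ≤ v x} := by
    intro F s
    ext
    simp
  refine Finset.sum_le_sum_of_forall_card_filter_le v ?_ fun s => ?_
  · simpa [encard_coe_eq_coe_finsetCard] using hB.encard_eq_encard h.isBasis
  · have hBs : M.Indep (↑B ∩ v ⁻¹' Ici s) := hB.indep.subset inter_subset_left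
    have hle := hBs.encard_le_eRk_of_subset (inter_subset_inter_left _ hB.subset)
    rw [← (h (Ici s) (isUpperSet_Ici s)).encard_eq_eRk, hcoe, hcoe,
      encard_coe_eq_coe_finsetCard, encard_coe_eq_coe_finsetCard] at hle
    exact_mod_cast hle

end Matroid

theorem stmt_0_general {α : Type*} [DecidableEq α] (M : Matroid α) (n : ℕ)
    (e : Fin n → α) (hE : M.E = Set.range e)
    (v : α → ℝ)
    (S : ℕ → Finset α) (hS0 : S 0 = ∅)
    (hstep : ∀ k : ℕ, ∀ hk : k < n,
      (M.Indep (insert (e ⟨k, hk⟩) ↑(S k)) → S (k + 1) = insert (e ⟨k, hk⟩) (S k)) ∧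
      (¬ M.Indep (insert (e ⟨k, hk⟩) ↑(S k)) →
        ∃ j ∈ insert (e ⟨k, hk⟩) (S k),
          M.Indep ↑((insert (e ⟨k, hk⟩) (S k)).erase j) ∧
          (∀ j' ∈ insert (e ⟨k, hk⟩) (S k),
            M.Indep ↑((insert (e ⟨k, hk⟩) (S k)).erase j') → v j ≤ v j') ∧
          (v j < v (e ⟨k, hk⟩) → S (k + 1) = (insert (e ⟨k, hk⟩) (S k)).erase j) ∧
          (¬ v j < v (e ⟨k, hk⟩) → S (k + 1) = S k))) :
    ∀ k ≤ n, M.IsBasis ↑(S k) (e '' {i : Fin n | (i : ℕ) < k}) ∧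
      ∀ B : Finset α, M.IsBasis ↑B (e '' {i : Fin n | (i : ℕ) < k}) →
        ∑ a ∈ B, v a ≤ ∑ a ∈ S k, v a := by
  have hupper : ∀ k ≤ n, M.IsUpperBasis v ↑(S k) (e '' {i : Fin n | (i : ℕ) < k}) := by
    intro k
    induction k with
    | zero => exact fun _ => by simpa [hS0] using M.isUpperBasis_empty v
    | succ k ih =>
      intro hk
      rw [Fin.image_setOf_val_lt_succ e hk]
      exact (ih (by omega)).of_greedyStep (hE ▸ mem_range_self _) (hstep k hk)
  exact fun k hk => ⟨(hupper k hk).isBasis, fun B hB => (hupper k hk).sum_le hB⟩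

/-- The greedy matroid algorithm (GMA) of the buyback problem maintains, after each
arrival, a maximum-weight basis of the matroid restricted to the elements seen so far. -/
theorem stmt_0 {α : Type*} [DecidableEq α] (M : Matroid α) (n : ℕ)
    (e : Fin n → α) (he : Function.Injective e) (hE : M.E = Set.range e)
    (v : α → ℝ) (hv : ∀ a, 0 ≤ v a)
    (S : ℕ → Finset α) (hS0 : S 0 = ∅)
    (hstep : ∀ k : ℕ, ∀ hk : k < n,
      (M.Indep (insert (e ⟨k, hk⟩) ↑(S k)) → S (k + 1) = insert (e ⟨k, hk⟩) (S k)) ∧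
      (¬ M.Indep (insert (e ⟨k, hk⟩) ↑(S k)) →
        ∃ j ∈ insert (e ⟨k, hk⟩) (S k),
          M.Indep ↑((insert (e ⟨k, hk⟩) (S k)).erase j) ∧
          (∀ j' ∈ insert (e ⟨k, hk⟩) (S k),
            M.Indep ↑((insert (e ⟨k, hk⟩) (S k)).erase j') → v j ≤ v j') ∧
          (v j < v (e ⟨k, hk⟩) → S (k + 1) = (insert (e ⟨k, hk⟩) (S k)).erase j) ∧
          (¬ v j < v (e ⟨k, hk⟩) → S (k + 1) = S k))) :
    ∀ k ≤ n, M.IsBasis ↑(S k) (e '' {i : Fin n | (i : ℕ) < k}) ∧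
      ∀ B : Finset α, M.IsBasis ↑B (e '' {i : Fin n | (i : ℕ) < k}) →
        ∑ a ∈ B, v a ≤ ∑ a ∈ S k, v a :=
  stmt_0_general M n e hE v S hS0 hstep
end

section
/- Let M be a matroid on a finite ground set U with two weight functions v, w : U → ℝ such that the mapping is monotonic, i.e., for all i, j ∈ U, v(i) ≥ v(j) implies w(i) ≥ w(j). Then every basis of M that has maximum total weight with respect to v also has maximum total weight with respect to w. -/
/-!
A basis `B` of maximum `v`-weight admits no improving single exchange `B - y + x` for `v`, and by
monotonicity none for `w` either. Such an exchange-optimal basis contains, for every threshold `t`,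
at least as many elements of `w`-weight `≥ t` as any other basis: otherwise the matroid
augmentation axiom followed by a fundamental-circuit exchange would produce an improving exchange.
Since all bases have the same size, dominating threshold counts give a dominating `w`-sum.
-/

theorem Multiset.sum_le_sum_of_card_filter_le {β : Type*} [AddCommMonoid β] [LinearOrder β]
    [IsOrderedAddMonoid β] {m m' : Multiset β} (hcard : card m' = card m)
    (hcount : ∀ t, card (m'.filter (t ≤ ·)) ≤ card (m.filter (t ≤ ·))) : m'.sum ≤ m.sum := by
  induction m' using Multiset.strongInductionOn generalizing m with
  | ih m' ih =>
  rcases eq_or_ne m' 0 with rfl | hm'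
  · rw [card_zero, eq_comm, card_eq_zero] at hcard
    simp [hcard]
  obtain ⟨a, ham', ha⟩ := exists_max_image id hm'
  obtain ⟨s', rfl⟩ := exists_cons_of_mem ham'
  obtain ⟨b, hbm, hab⟩ : ∃ b ∈ m, a ≤ b := by
    have : 0 < card (m.filter (a ≤ ·)) := (hcount a).trans_lt' (by simp)
    simpa using card_pos_iff_exists_mem.1 this
  obtain ⟨s, rfl⟩ := exists_cons_of_mem hbm
  have hrest : s'.sum ≤ s.sum := by
    refine ih s' (lt_cons_self s' a) (by simpa using hcard) fun t ↦ ?_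
    by_cases hta : t ≤ a
    · simpa [filter_cons_of_pos _ hta, filter_cons_of_pos _ (hta.trans hab)] using hcount t
    · have : s'.filter (t ≤ ·) = 0 :=
        filter_eq_nil.2 fun c hc htc ↦ hta (htc.trans (ha c (mem_cons_of_mem hc)))
      simp [this]
  simpa only [sum_cons] using add_le_add hab hrest

open Finset in
theorem Finset.sum_le_sum_of_card_filter_le {ι β : Type*} [AddCommMonoid β] [LinearOrder β]
    [IsOrderedAddMonoid β] {s s' : Finset ι} {f : ι → β} (hcard : #s' = #s)
    (hcount : ∀ t, #{i ∈ s' | t ≤ f i} ≤ #{i ∈ s | t ≤ f i}) :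
    ∑ i ∈ s', f i ≤ ∑ i ∈ s, f i :=
  Multiset.sum_le_sum_of_card_filter_le (by simpa using hcard)
    (by simpa [Multiset.filter_map, Finset.card_def] using hcount)

namespace Matroid

variable {α : Type*} {M : Matroid α}

theorem IsBase.exists_exchange_of_insert_indep {B I : Set α} {x : α} (hB : M.IsBase B)
    (hxE : x ∈ M.E) (hxB : x ∉ B) (hI : M.Indep (insert x I)) :
    ∃ y ∈ B \ I, M.IsBase (insert x B \ {y}) := by
  have hC := hB.fundCircuit_isCircuit hxE hxB
  obtain ⟨y, hyC, hyI⟩ := Set.not_subset.1 fun h ↦ hC.not_indep (hI.subset h)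
  have hyB : y ∈ B :=
    (M.fundCircuit_subset_insert x B hyC).resolve_left fun h ↦ hyI (h ▸ Set.mem_insert x I)
  have hindep := (hB.indep.mem_fundCircuit_iff (by rwa [hB.closure_eq]) hxB).1 hyC
  exact ⟨y, ⟨hyB, fun h ↦ hyI (Or.inr h)⟩, hB.exchange_isBase_of_indep' hyB hxB hindep⟩

open Finset in
theorem IsBase.card_filter_le_of_forall_exchange {β : Type*} [LinearOrder β] [DecidableEq α]
    {B B' : Finset α} {w : α → β} (hB : M.IsBase B) (hB' : M.IsBase B')
    (hloc : ∀ x ∉ B, ∀ y ∈ B, M.IsBase ↑((insert x B).erase y) → w x ≤ w y) (t : β) :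
    #{i ∈ B' | t ≤ w i} ≤ #{i ∈ B | t ≤ w i} := by
  by_contra! hlt
  have hIB : (↑{i ∈ B | t ≤ w i} : Set α) ⊆ B := coe_subset.2 (filter_subset _ _)
  have hI : M.Indep ↑{i ∈ B | t ≤ w i} := hB.indep.subset hIB
  have hJ : M.Indep ↑{i ∈ B' | t ≤ w i} := hB'.indep.subset (coe_subset.2 (filter_subset _ _))
  obtain ⟨x, ⟨hxJ, hxI⟩, hxI'⟩ := hI.augment hJ (by
    simpa only [Set.encard_coe_eq_coe_finsetCard, Nat.cast_lt] using hlt)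
  simp only [mem_coe, mem_filter] at hxJ hxI
  have hxB : x ∉ B := fun h ↦ hxI ⟨h, hxJ.2⟩
  obtain ⟨y, ⟨hyB, hyI⟩, hxy⟩ :=
    hB.exists_exchange_of_insert_indep (hB'.subset_ground hxJ.1) hxB hxI'
  simp only [mem_coe, mem_filter] at hyB hyI
  exact hyI ⟨hyB, hxJ.2.trans (hloc x hxB y hyB (by simpa using hxy))⟩

end Matroid

theorem stmt_1_general {α : Type*} (M : Matroid α)
    (v w : α → ℝ) (hmono : ∀ i j : α, v i ≥ v j → w i ≥ w j)
    (B : Finset α) (hB : M.IsBase ↑B)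
    (hmax : ∀ B' : Finset α, M.IsBase ↑B' → ∑ a ∈ B', v a ≤ ∑ a ∈ B, v a) :
    ∀ B' : Finset α, M.IsBase ↑B' → ∑ a ∈ B', w a ≤ ∑ a ∈ B, w a := by
  classical
  intro B' hB'
  have hloc : ∀ x ∉ B, ∀ y ∈ B, M.IsBase ↑((insert x B).erase y) → w x ≤ w y := by
    intro x hx y hy hxy
    refine hmono y x ?_
    have := hmax _ hxy
    rw [Finset.sum_erase_eq_sub (Finset.mem_insert_of_mem hy), Finset.sum_insert hx] at this
    linarith
  have hcard : B'.card = B.card := by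
    simpa using hB'.encard_eq_encard_of_isBase hB
  exact Finset.sum_le_sum_of_card_filter_le hcard (hB.card_filter_le_of_forall_exchange hB' hloc)

/-- If the mapping from weights `v` to weights `w` is monotonic, then any basis of a
matroid on a finite ground set of maximum weight w.r.t. `v` also has maximum
weight w.r.t. `w`. -/
theorem stmt_1 {α : Type*} [Fintype α] (M : Matroid α) (hE : M.E = Set.univ)
    (v w : α → ℝ) (hmono : ∀ i j : α, v i ≥ v j → w i ≥ w j)
    (B : Finset α) (hB : M.IsBase ↑B)
    (hmax : ∀ B' : Finset α, M.IsBase ↑B' → ∑ a ∈ B', v a ≤ ∑ a ∈ B, v a) :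
    ∀ B' : Finset α, M.IsBase ↑B' → ∑ a ∈ B', w a ≤ ∑ a ∈ B, w a :=
  stmt_1_general M v w hmono B hB hmax
end

section
/- Let r > 1 and v > 0 be real numbers. For u ∈ [0,1] define z(u) = u + ⌊log_r(v) − u⌋ and w(u) = r^{z(u)}. Then w(u) ≤ v for every u ∈ [0,1], and if u is drawn uniformly at random from [0,1], then E[w(u)] = ∫_0^1 r^{z(u)} du = ((r − 1)/(r · ln r)) · v. -/
lemma integral_const_rpow_aux {r : ℝ} (hr : 1 < r) (a b : ℝ) :
    (∫ u in a..b, r ^ u) = (r ^ b - r ^ a) / Real.log r := by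
  have hr0 : (0:ℝ) < r := lt_trans one_pos hr
  have hlog : Real.log r ≠ 0 := ne_of_gt (Real.log_pos hr)
  have h : ∀ u ∈ Set.uIcc a b, HasDerivAt (fun x => r ^ x / Real.log r) (r ^ u) u := by
    intro u _
    have := ((Real.hasStrictDerivAt_const_rpow hr0 u).hasDerivAt).div_const (Real.log r)
    simpa [mul_div_assoc, mul_div_cancel_right₀ _ hlog] using this
  have hc : Continuous fun u : ℝ => r ^ u :=
    continuous_const.rpow continuous_id (fun _ => Or.inl (ne_of_gt hr0))
  have hcont : IntervalIntegrable (fun u => r ^ u) MeasureTheory.volume a b :=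
    hc.intervalIntegrable a b
  have := intervalIntegral.integral_eq_sub_of_hasDerivAt h hcont
  rw [this]; ring

/-- Randomized rounding of RandAlg(r): with `z u = u + ⌊log_r v - u⌋` and `w u = r^(z u)`,
we have `w u ≤ v` for all `u ∈ [0,1]`, and the expectation of `w u` over a uniform
`u ∈ [0,1]` equals `((r-1)/(r ln r)) · v`. -/
theorem stmt_5 (r v : ℝ) (hr : 1 < r) (hv : 0 < v) :
    (∀ u ∈ Set.Icc (0:ℝ) 1, r ^ (u + (⌊Real.logb r v - u⌋ : ℝ)) ≤ v) ∧
    (∫ u in (0:ℝ)..1, r ^ (u + (⌊Real.logb r v - u⌋ : ℝ))) =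
      ((r - 1) / (r * Real.log r)) * v := by
  have hr0 : (0:ℝ) < r := lt_trans one_pos hr
  have hr1 : r ≠ 1 := ne_of_gt hr
  have hlogpos : 0 < Real.log r := Real.log_pos hr
  set L := Real.logb r v with hL
  have hrL : r ^ L = v := Real.rpow_logb hr0 hr1 hv
  set n : ℤ := ⌊L⌋ with hn
  set f : ℝ := Int.fract L with hf
  have hf0 : 0 ≤ f := Int.fract_nonneg L
  have hf1 : f < 1 := Int.fract_lt_one L
  have hnf : (n:ℝ) + f = L := by rw [hf, Int.fract]; ring
  constructor
  · intro u hu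
    have h1 : (⌊L - u⌋ : ℝ) ≤ L - u := Int.floor_le _
    have : u + (⌊L - u⌋ : ℝ) ≤ L := by linarith
    calc r ^ (u + (⌊L - u⌋ : ℝ)) ≤ r ^ L := by
          exact Real.rpow_le_rpow_left_iff hr |>.mpr this
      _ = v := hrL
  · -- split at f
    have key1 : ∀ u ∈ Set.uIcc (0:ℝ) f, r ^ (u + (⌊L - u⌋ : ℝ)) = r ^ (u + (n:ℝ)) := by
      intro u hu
      rw [Set.uIcc_of_le hf0] at hu
      have hfloor : ⌊L - u⌋ = n := by
        rw [Int.floor_eq_iff]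
        constructor
        · have : u ≤ f := hu.2
          push_cast; linarith [hnf]
        · have : 0 ≤ u := hu.1
          have hLn : L < n + 1 := by push_cast; linarith [hnf, hf1]
          push_cast; linarith
      rw [hfloor]
    have key2 : ∀ u ∈ Set.Ioc f 1, r ^ (u + (⌊L - u⌋ : ℝ)) = r ^ (u + ((n:ℝ) - 1)) := by
      intro u hu
      have hfloor : ⌊L - u⌋ = n - 1 := by
        rw [Int.floor_eq_iff]
        constructor
        · have : u ≤ 1 := hu.2
          push_cast; linarith [hnf, hf0]
        · have : f < u := hu.1
          push_cast; linarith [hnf]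
      rw [hfloor]; push_cast; ring_nf
    have hfle1 : f ≤ 1 := le_of_lt hf1
    have int1 : (∫ u in (0:ℝ)..f, r ^ (u + (⌊L - u⌋ : ℝ))) =
        ∫ u in (0:ℝ)..f, r ^ (u + (n:ℝ)) :=
      intervalIntegral.integral_congr key1
    have int2 : (∫ u in f..(1:ℝ), r ^ (u + (⌊L - u⌋ : ℝ))) =
        ∫ u in f..(1:ℝ), r ^ (u + ((n:ℝ) - 1)) := by
      apply intervalIntegral.integral_congr_ae
      filter_upwards with u hu
      rw [Set.uIoc_of_le hfle1] at hu
      exact key2 u hu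
    have hint : ∀ c : ℝ, ∀ a b : ℝ, (∫ u in a..b, r ^ (u + c)) =
        r ^ c * ((r ^ b - r ^ a) / Real.log r) := by
      intro c a b
      have : ∀ u : ℝ, r ^ (u + c) = r ^ c * r ^ u := by
        intro u; rw [← Real.rpow_add hr0]; ring_nf
      simp_rw [this]
      rw [intervalIntegral.integral_const_mul, integral_const_rpow_aux hr]

    have hintg : ∀ a b : ℝ, IntervalIntegrable (fun u => r ^ (u + (⌊L - u⌋ : ℝ)))
        MeasureTheory.volume a b := by
      intro a b
      apply IntervalIntegrable.mono_fun' (g := fun _ => v)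
      · exact intervalIntegrable_const
      · apply Measurable.aestronglyMeasurable
        have heq : ∀ u : ℝ, r ^ (u + (⌊L - u⌋ : ℝ)) =
            Real.exp (Real.log r * (u + (⌊L - u⌋ : ℝ))) := fun u =>
          Real.rpow_def_of_pos hr0 _
        simp_rw [heq]
        exact Real.measurable_exp.comp (measurable_const.mul (measurable_id.add
          (measurable_from_top.comp (Int.measurable_floor.comp (measurable_const.sub measurable_id)))))
      · filter_upwards with u
        rw [Real.norm_eq_abs, abs_of_pos (Real.rpow_pos_of_pos hr0 _), ← hrL]
        apply Real.rpow_le_rpow_left_iff hr |>.mpr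
        have := Int.floor_le (L - u)
        linarith
    have hsplit : (∫ u in (0:ℝ)..1, r ^ (u + (⌊L - u⌋ : ℝ))) =
        (∫ u in (0:ℝ)..f, r ^ (u + (⌊L - u⌋ : ℝ))) +
        (∫ u in f..(1:ℝ), r ^ (u + (⌊L - u⌋ : ℝ))) :=
      (intervalIntegral.integral_add_adjacent_intervals (hintg 0 f) (hintg f 1)).symm
    rw [hsplit, int1, int2, hint, hint]
    have e1 : r ^ ((n:ℝ) - 1) = r ^ (n:ℝ) / r := by
      rw [Real.rpow_sub hr0, Real.rpow_one]
    have e2 : r ^ (n:ℝ) * r ^ f = v := by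
      rw [← Real.rpow_add hr0, hnf, hrL]
    have e3 : r ^ ((0:ℝ)) = 1 := Real.rpow_zero r
    have e4 : r ^ (1:ℝ) = r := Real.rpow_one r
    rw [e1, e3, e4]
    have hlogne : Real.log r ≠ 0 := ne_of_gt hlogpos
    have hrne : r ≠ 0 := ne_of_gt hr0
    rw [← e2]
    field_simp
    ring
end

section
/- For every real number f > 0, there exists a unique real number r* in the open interval (1 + f, ∞) satisfying (1 + f) · ln(r*) = r* − 1 − f. -/
/-!
Write `a = 1 + f > 1` and `g r = a·ln r - r`. Since `g' r = a/r - 1 < 0` for `r > a`, `g` is strictly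
decreasing on `[a, ∞)`, so the equation `g r = -a` has at most one solution there. It has one by the
intermediate value theorem: `g a = a·ln a - a > -a`, while `ln x ≤ x - 1` at `x = 2a` gives
`g (4a²) ≤ -2a < -a`.
-/

open Real Set

lemma continuousOn_mul_log_sub_self {a : ℝ} (ha : 0 < a) :
    ContinuousOn (fun r => a * log r - r) (Ici a) :=
  (continuousOn_const.mul (continuousOn_log.mono fun _ hr => (ha.trans_le hr).ne')).sub
    continuousOn_id

lemma strictAntiOn_mul_log_sub_self {a : ℝ} (ha : 0 < a) :
    StrictAntiOn (fun r => a * log r - r) (Ici a) := by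
  refine strictAntiOn_of_deriv_neg (convex_Ici a) (continuousOn_mul_log_sub_self ha) ?_
  intro r hr
  rw [interior_Ici] at hr
  have hr0 : 0 < r := ha.trans hr
  have hd : HasDerivAt (fun r => a * log r - r) (a * r⁻¹ - 1) r :=
    ((hasDerivAt_log hr0.ne').const_mul a).sub (hasDerivAt_id' r)
  rw [hd.deriv, sub_neg, ← div_eq_mul_inv, div_lt_one hr0]
  exact hr

lemma mul_log_two_mul_sq_le {a : ℝ} (ha : 0 < a) :
    a * log ((2 * a) ^ 2) ≤ (2 * a) ^ 2 - 2 * a := by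
  have hlog : log (2 * a) ≤ 2 * a - 1 := log_le_sub_one_of_pos (by positivity)
  rw [log_pow, Nat.cast_ofNat]
  nlinarith [mul_le_mul_of_nonneg_left hlog ha.le]

theorem existsUnique_mul_log_eq_sub {a : ℝ} (ha : 1 < a) :
    ∃! r ∈ Ioi a, a * log r = r - a := by
  have ha0 : 0 < a := one_pos.trans ha
  set g : ℝ → ℝ := fun r => a * log r - r
  have hg_a : -a < g a := by
    have := mul_pos ha0 (log_pos ha)
    simp only [g]
    linarith
  have hg_far : g ((2 * a) ^ 2) < -a := by
    have := mul_log_two_mul_sq_le ha0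
    simp only [g]
    linarith
  have ha_le : a ≤ (2 * a) ^ 2 := by nlinarith
  obtain ⟨r, hr, hgr⟩ := intermediate_value_Ioo' ha_le
    ((continuousOn_mul_log_sub_self ha0).mono Icc_subset_Ici_self) ⟨hg_far, hg_a⟩
  have hsol : ∀ s, a * log s = s - a ↔ g s = -a := fun s => by
    simp only [g]
    constructor <;> intro h <;> linarith
  refine ⟨r, ⟨hr.1, (hsol r).2 hgr⟩, fun s ⟨hs, hgs⟩ => ?_⟩
  exact (strictAntiOn_mul_log_sub_self ha0).injOn (mem_Ici.2 hs.le) (mem_Ici.2 hr.1.le)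
    (((hsol s).1 hgs).trans hgr.symm)

/-- For every `f > 0` there is a unique `r* ∈ (1+f, ∞)` with
`(1+f)·ln(r*) = r* - 1 - f`. -/
theorem stmt_6 (f : ℝ) (hf : 0 < f) :
    ∃! r : ℝ, r ∈ Set.Ioi (1 + f) ∧ (1 + f) * Real.log r = r - 1 - f := by
  simpa only [sub_sub] using existsUnique_mul_log_eq_sub (lt_add_of_pos_right 1 hf)
end

section
/- Let f > 0 and let r* be the unique real number in (1 + f, ∞) with (1 + f) · ln(r*) = r* − 1 − f. Then for every real r > 1 + f, one has r · ln(r)/(r − 1 − f) ≥ r*/(1 + f), with equality if and only if r = r*. In other words, the function r ↦ r·ln(r)/(r−1−f) attains its minimum over (1+f, ∞) precisely at r = r*, and the minimum value equals r*/(1+f). -/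
/-!
Write `c = 1 + f`. The equation defining `r*` says `r* = c (log r* + 1)`, so clearing denominators
the claim becomes `c (r log r - r log r* - r + r*) ≥ 0`, with equality only at `r = r*`.
This is the tangent-line bound `log t < t - 1` (for `t ≠ 1`) at `t = r*/r`, multiplied by `c r`.
-/

open Real

namespace Real

theorem mul_log_sub_log_lt_sub {x y : ℝ} (hx : 0 < x) (hy : 0 < y) (hxy : x ≠ y) :
    x * (log y - log x) < y - x := by
  have hlt : log (y / x) < y / x - 1 :=
    log_lt_sub_one_of_pos (div_pos hy hx) (by rwa [ne_eq, div_eq_one_iff_eq hx.ne', eq_comm])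
  rw [log_div hy.ne' hx.ne'] at hlt
  calc x * (log y - log x) < x * (y / x - 1) := mul_lt_mul_of_pos_left hlt hx
    _ = y - x := by field_simp

theorem sub_mul_lt_mul_mul_log {c s x : ℝ} (hc : 0 < c) (hs : 0 < s)
    (hroot : c * log s = s - c) (hx : 0 < x) (hxs : x ≠ s) :
    s * (x - c) < c * (x * log x) := by
  linear_combination mul_lt_mul_of_pos_left (mul_log_sub_log_lt_sub hx hs hxs) hc - x * hroot

end Real

/-- The competitive ratio `r·ln(r)/(r-1-f)` of RandAlg(r) is minimized over
`(1+f, ∞)` exactly at the solution `r*` of `(1+f)·ln(r*) = r* - 1 - f`, with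
minimum value `r*/(1+f)`. -/
theorem stmt_7 (f rs : ℝ) (hf : 0 < f) (hrs : rs ∈ Set.Ioi (1 + f))
    (heq : (1 + f) * Real.log rs = rs - 1 - f) :
    ∀ r : ℝ, 1 + f < r →
      rs / (1 + f) ≤ r * Real.log r / (r - 1 - f) ∧
      (r * Real.log r / (r - 1 - f) = rs / (1 + f) ↔ r = rs) := by
  intro r hr
  have hc : 0 < 1 + f := by linarith
  have hs : 0 < rs := hc.trans hrs
  have hden : 0 < r - 1 - f := by linarith
  have hroot : (1 + f) * log rs = rs - (1 + f) := by rw [heq]; ring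
  have hstrict (hne : r ≠ rs) : rs / (1 + f) < r * log r / (r - 1 - f) := by
    rw [div_lt_div_iff₀ hc hden, mul_comm _ (1 + f), sub_sub]
    exact sub_mul_lt_mul_mul_log hc hs hroot (hc.trans hr) hne
  have hvalue : rs * log rs / (rs - 1 - f) = rs / (1 + f) := by
    rw [div_eq_div_iff (by linarith [hrs.out]) hc.ne']
    linear_combination rs * heq
  refine ⟨?_, fun h => by_contra fun hne => (hstrict hne).ne' h, fun h => h ▸ hvalue⟩
  rcases eq_or_ne r rs with rfl | hne
  · exact hvalue.ge
  · exact (hstrict hne).le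
end

section
/- Let y > 1, w > 1, f ≥ 0 with w ≥ 1 + f, and let k ≥ 1 be an integer with w^{k−1} ≤ y. Then (1 + (k−1)·(w − 1 − f)/w) / (1 + ln(y)) ≤ 1/ln(y) + (w − 1 − f)/(w · ln(w)). -/
/-! The marks `1, w, …, w^(k-1)` fit below `y`, so `(k - 1) log w ≤ log y`; bounding the numerator
this way leaves `(1 + a L) / (1 + L) ≤ 1 / L + a` with `L = log y`, `a = (w - 1 - f) / (w log w) ≥ 0`. -/

open Real

lemma natCast_sub_one_mul_log_le_log {w y : ℝ} {k : ℕ} (hw : 0 < w) (hk : 1 ≤ k)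
    (hky : w ^ (k - 1) ≤ y) : ((k : ℝ) - 1) * log w ≤ log y := by
  rw [← Nat.cast_pred hk, ← log_pow]
  exact log_le_log (pow_pos hw _) hky

lemma one_add_mul_div_one_add_le {a L : ℝ} (ha : 0 ≤ a) (hL : 0 < L) :
    (1 + a * L) / (1 + L) ≤ 1 / L + a := by
  rw [div_le_iff₀ (by linarith)]
  have hexpand : (1 / L + a) * (1 + L) = 1 + a * L + (1 / L + a) := by
    field_simp
    ring
  have : 0 < 1 / L + a := by positivity
  linarith

theorem stmt_12_general (y w f : ℝ) (k : ℕ) (hy : 1 < y) (hw : 1 < w)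
    (hwf : 1 + f ≤ w) (hk : 1 ≤ k) (hky : w ^ (k - 1) ≤ y) :
    (1 + ((k : ℝ) - 1) * (w - 1 - f) / w) / (1 + Real.log y) ≤
      1 / Real.log y + (w - 1 - f) / (w * Real.log w) := by
  set a := (w - 1 - f) / (w * log w)
  have ha : 0 ≤ a := div_nonneg (by linarith) (mul_pos (by linarith) (log_pos hw)).le
  have hnum : ((k : ℝ) - 1) * (w - 1 - f) / w = a * (((k : ℝ) - 1) * log w) := by
    simp only [a]
    field_simp [(log_pos hw).ne']
  have hsteps : ((k : ℝ) - 1) * log w ≤ log y :=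
    natCast_sub_one_mul_log_le_log (by linarith) hk hky
  calc (1 + ((k : ℝ) - 1) * (w - 1 - f) / w) / (1 + log y)
      ≤ (1 + a * log y) / (1 + log y) := by
        rw [hnum]
        gcongr (1 + a * ?_) / _
        linarith [log_pos hy]
    _ ≤ 1 / log y + a := one_add_mul_div_one_add_le ha (log_pos hy)

/-- Payoff-ratio bound: if the algorithm marks at `1, w, …, w^{k-1}` with `w^{k-1} ≤ y`,
then `(1 + (k-1)(w-1-f)/w)/(1 + ln y) ≤ 1/ln y + (w-1-f)/(w·ln w)`. -/
theorem stmt_12 (y w f : ℝ) (k : ℕ) (hy : 1 < y) (hw : 1 < w) (hf : 0 ≤ f)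
    (hwf : 1 + f ≤ w) (hk : 1 ≤ k) (hky : w ^ (k - 1) ≤ y) :
    (1 + ((k : ℝ) - 1) * (w - 1 - f) / w) / (1 + Real.log y) ≤
      1 / Real.log y + (w - 1 - f) / (w * Real.log w) :=
  stmt_12_general y w f k hy hw hwf hk hky
end

section
/- Let f > 0 and let r* be the unique real number in (1 + f, ∞) with (1 + f)·ln(r*) = r* − 1 − f. Then for every real u > 1, one has (u − 1 − f)/(u · ln(u)) ≤ (1 + f)/r*, with equality if and only if u = r*. -/
/-!
Writing `c = 1 + f`, the claim `(u - c)/(u log u) ≤ c/r*` is equivalent to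
`r*·(u - c) ≤ c·u·log u`. Substituting `r* - c = c·log r*`, this becomes `c` times the
tangent-line inequality `log (r*/u) ≤ r*/u - 1`, which is strict unless `u = r*`.
-/

open Real

lemma Real.mul_sub_log_lt {r u : ℝ} (hr : 0 < r) (hu : 0 < u) (hne : u ≠ r) :
    u * (log r - log u) < r - u := by
  have hx : 0 < r / u := div_pos hr hu
  have hx1 : r / u ≠ 1 := fun h => hne ((div_eq_one_iff_eq hu.ne').mp h).symm
  have htangent := Real.log_lt_sub_one_of_pos hx hx1
  rw [Real.log_div hr.ne' hu.ne'] at htangent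
  calc u * (log r - log u) < u * (r / u - 1) := mul_lt_mul_of_pos_left htangent hu
    _ = r - u := by field_simp

lemma sub_div_mul_log_lt {c r u : ℝ} (hc : 0 < c) (hr : 0 < r) (hu : 1 < u)
    (heq : c * log r = r - c) (hne : u ≠ r) :
    (u - c) / (u * log u) < c / r := by
  have hu0 : 0 < u := by linarith
  have hlog : 0 < u * log u := mul_pos hu0 (Real.log_pos hu)
  rw [div_lt_div_iff₀ hlog hr]
  have := mul_lt_mul_of_pos_left (Real.mul_sub_log_lt hr hu0 hne) hc
  linear_combination this - u * heq

lemma sub_div_mul_log_self {c r : ℝ} (hc : 0 < c) (hcr : c < r)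
    (heq : c * log r = r - c) :
    (r - c) / (r * log r) = c / r := by
  have hlog : 0 < log r := pos_of_mul_pos_right (by linarith : 0 < c * log r) hc.le
  rw [← heq]
  field_simp

/-- The function `u ↦ (u - 1 - f)/(u·ln u)` on `(1,∞)` is maximized exactly at the
solution `r*` of `(1+f)·ln(r*) = r* - 1 - f`, with maximum value `(1+f)/r*`. -/
theorem stmt_13 (f rs : ℝ) (hf : 0 < f) (hrs : rs ∈ Set.Ioi (1 + f))
    (heq : (1 + f) * Real.log rs = rs - 1 - f) :
    ∀ u : ℝ, 1 < u →
      (u - 1 - f) / (u * Real.log u) ≤ (1 + f) / rs ∧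
      ((u - 1 - f) / (u * Real.log u) = (1 + f) / rs ↔ u = rs) := by
  intro u hu
  have hc : 0 < 1 + f := by linarith
  have hcr : 1 + f < rs := hrs
  have heq' : (1 + f) * log rs = rs - (1 + f) := by linarith
  simp only [sub_sub]
  rcases eq_or_ne u rs with rfl | hne
  · have hmax := sub_div_mul_log_self hc hcr heq'
    exact ⟨hmax.le, iff_of_true hmax rfl⟩
  · have hlt := sub_div_mul_log_lt hc (hc.trans hcr) hu heq' hne
    exact ⟨hlt.le, iff_of_false hlt.ne hne⟩
end
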